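/- arXiv:2511.17843 — 2 statements merged into one kernel-verified Lean document; each statement's English description precedes it below -/
import Mathlib

section
/- Let u : Fin N → ℝ≥0 with nonnegative utilities and let S ⊆ Fin N be nonempty. Then U(S) = Σ_{i∈S} u_i − (1/2) Σ_{i≠j, i,j∈S} min(u_i,u_j) ≤ max_{i∈S} u_i, with equality when |S| = 1. -/
open Finset

/-- Per-cell utility proxy of a selected set `S` of agents
(`(1/2)·Σ_{i≠j}` form of the unordered-pair redundancy penalty). -/
noncomputable def proxyUSet {N : ℕ} (u : Fin N → ℝ) (S : Finset (Fin N)) : ℝ :=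
  (∑ i ∈ S, u i) -
    (1 / 2) * ∑ i ∈ S, ∑ j ∈ S, if i ≠ j then min (u i) (u j) else 0

/-- The proxy utility of any nonempty selection is at most the best single
agent's utility, with equality for singletons. -/
theorem proxy_le_max {N : ℕ} (u : Fin N → ℝ) (hu : ∀ i, 0 ≤ u i)
    (S : Finset (Fin N)) (hS : S.Nonempty) :
    proxyUSet u S ≤ S.sup' hS u ∧ (S.card = 1 → proxyUSet u S = S.sup' hS u) := by
  constructor
  · obtain ⟨m, hm, hmax⟩ := S.exists_mem_eq_sup' hS u
    have hub : ∀ i ∈ S, u i ≤ u m := fun i hi => hmax ▸ le_sup' u hi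
    set f : Fin N → Fin N → ℝ := fun i j => if i ≠ j then min (u i) (u j) else 0 with hf
    have hf0 : ∀ i j, 0 ≤ f i j := by
      intro i j
      simp only [hf]
      split
      · exact le_min (hu i) (hu j)
      · exact le_refl 0
    set T : ℝ := ∑ i ∈ S.erase m, u i with hT
    have hsum : ∑ i ∈ S, u i = T + u m := (Finset.sum_erase_add S u hm).symm
    have hfm : ∀ i ∈ S.erase m, f i m = u i := by
      intro i hi
      have hne := Finset.ne_of_mem_erase hi
      simp [hf, hne, min_eq_left (hub i (Finset.mem_of_mem_erase hi))]
    have hmf : ∀ j ∈ S.erase m, f m j = u j := by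
      intro j hj
      have hne := Finset.ne_of_mem_erase hj
      simp [hf, hne.symm, min_eq_right (hub j (Finset.mem_of_mem_erase hj))]
    have hA : T ≤ ∑ i ∈ S.erase m, ∑ j ∈ S, f i j := by
      apply Finset.sum_le_sum
      intro i hi
      calc u i = f i m := (hfm i hi).symm
        _ ≤ ∑ j ∈ S, f i j := Finset.single_le_sum (fun j _ => hf0 i j) hm
    have hB : T ≤ ∑ j ∈ S, f m j := by
      rw [← Finset.sum_erase_add S _ hm]
      have : f m m = 0 := by simp [hf]
      rw [this, add_zero]
      exact le_of_eq (Finset.sum_congr rfl fun j hj => (hmf j hj).symm)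
    have hP : 2 * T ≤ ∑ i ∈ S, ∑ j ∈ S, f i j := by
      rw [← Finset.sum_erase_add S _ hm]
      linarith
    have : proxyUSet u S = (∑ i ∈ S, u i) - (1/2) * ∑ i ∈ S, ∑ j ∈ S, f i j := rfl
    rw [this, hsum, ← hmax]
    linarith
  · intro hcard
    obtain ⟨a, ha⟩ := Finset.card_eq_one.mp hcard
    subst ha
    simp [proxyUSet]
end

section
/- For any real-valued scores u : Fin N → ℝ with a unique maximizer, and any τ ∈ ℝ with u_i ≠ τ for all i, the product of the limits lim_{η→0⁺} σ((u_i − τ)/η) · lim_{γ→0⁺} softmax_γ(u)_i equals the deterministic mask m_i = 𝟙[u_i = max_k u_k] · 𝟙[u_i > τ]. -/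
open Topology Filter

private lemma div_tendsto_atTop (c : ℝ) (hc : 0 < c) :
    Tendsto (fun η : ℝ => c / η) (𝓝[>] (0 : ℝ)) atTop := by
  simpa [div_eq_mul_inv] using (tendsto_inv_nhdsGT_zero.const_mul_atTop hc)

private lemma div_tendsto_atBot (c : ℝ) (hc : c < 0) :
    Tendsto (fun η : ℝ => c / η) (𝓝[>] (0 : ℝ)) atBot := by
  have h := div_tendsto_atTop (-c) (by linarith)
  have := tendsto_neg_atTop_atBot.comp h
  simpa [Function.comp_def, neg_div, neg_neg] using this

private lemma sig_lim_one (c : ℝ) (hc : 0 < c) :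
    Tendsto (fun η : ℝ => 1 / (1 + Real.exp (-(c / η)))) (𝓝[>] (0 : ℝ)) (𝓝 1) := by
  have h1 : Tendsto (fun η : ℝ => -(c / η)) (𝓝[>] (0 : ℝ)) atBot :=
    tendsto_neg_atTop_atBot.comp (div_tendsto_atTop c hc)
  have h2 : Tendsto (fun η : ℝ => Real.exp (-(c / η))) (𝓝[>] (0 : ℝ)) (𝓝 0) :=
    Real.tendsto_exp_atBot.comp h1
  have h3 : Tendsto (fun η : ℝ => 1 + Real.exp (-(c / η))) (𝓝[>] (0 : ℝ)) (𝓝 1) := by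
    simpa using tendsto_const_nhds.add h2
  have := h3.inv₀ one_ne_zero
  simpa [one_div] using this

private lemma sig_lim_zero (c : ℝ) (hc : c < 0) :
    Tendsto (fun η : ℝ => 1 / (1 + Real.exp (-(c / η)))) (𝓝[>] (0 : ℝ)) (𝓝 0) := by
  have h1 : Tendsto (fun η : ℝ => -(c / η)) (𝓝[>] (0 : ℝ)) atTop :=
    tendsto_neg_atBot_atTop.comp (div_tendsto_atBot c hc)
  have h2 : Tendsto (fun η : ℝ => Real.exp (-(c / η))) (𝓝[>] (0 : ℝ)) atTop :=
    Real.tendsto_exp_atTop.comp h1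
  have h3 : Tendsto (fun η : ℝ => 1 + Real.exp (-(c / η))) (𝓝[>] (0 : ℝ)) atTop :=
    tendsto_atTop_add_const_left _ _ h2
  simpa [one_div, Pi.inv_def] using h3.inv_tendsto_atTop

private lemma softmax_lim {N : ℕ} (u : Fin N → ℝ) (istar : Fin N)
    (hstar : ∀ k, k ≠ istar → u k < u istar) (i : Fin N) :
    Tendsto (fun γ : ℝ => Real.exp (u i / γ) / ∑ k, Real.exp (u k / γ))
      (𝓝[>] (0 : ℝ)) (𝓝 (if i = istar then 1 else 0)) := by
  set M := u istar with hM
  have term : ∀ k : Fin N, Tendsto (fun γ : ℝ => Real.exp ((u k - M) / γ))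
      (𝓝[>] (0 : ℝ)) (𝓝 (if k = istar then 1 else 0)) := by
    intro k
    by_cases hk : k = istar
    · subst hk
      simp only [sub_self, zero_div, Real.exp_zero, if_pos rfl]
      simpa [hM] using (tendsto_const_nhds : Tendsto (fun _ : ℝ => (1:ℝ)) (𝓝[>] (0:ℝ)) (𝓝 1))
    · have hlt : u k - M < 0 := sub_neg.mpr (hstar k hk)
      simp only [if_neg hk]
      exact Real.tendsto_exp_atBot.comp (div_tendsto_atBot _ hlt)
  have hden : Tendsto (fun γ : ℝ => ∑ k, Real.exp ((u k - M) / γ))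
      (𝓝[>] (0 : ℝ)) (𝓝 1) := by
    have := tendsto_finset_sum Finset.univ (fun k _ => term k)
    simpa [Finset.sum_ite_eq' Finset.univ istar] using this
  have hmain : Tendsto (fun γ : ℝ => Real.exp ((u i - M) / γ) / ∑ k, Real.exp ((u k - M) / γ))
      (𝓝[>] (0 : ℝ)) (𝓝 (if i = istar then 1 else 0)) := by
    simpa [Pi.div_def] using (term i).div hden one_ne_zero
  refine hmain.congr' ?_
  filter_upwards [self_mem_nhdsWithin] with γ (hγ : 0 < γ)
  have hexp : ∀ k : Fin N, Real.exp ((u k - M) / γ) * Real.exp (M / γ) = Real.exp (u k / γ) := by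
    intro k
    rw [← Real.exp_add]
    congr 1
    field_simp
    ring
  calc Real.exp ((u i - M) / γ) / ∑ k, Real.exp ((u k - M) / γ)
      = (Real.exp ((u i - M) / γ) * Real.exp (M / γ)) /
        ((∑ k, Real.exp ((u k - M) / γ)) * Real.exp (M / γ)) := by
        rw [mul_div_mul_right _ _ (Real.exp_ne_zero _)]
    _ = Real.exp (u i / γ) / ∑ k, Real.exp (u k / γ) := by
        rw [hexp, Finset.sum_mul]
        congr 1
        exact Finset.sum_congr rfl fun k _ => hexp k

/-- Consistency of the relaxed train-time mask and the deterministic policy: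
the product of the zero-temperature limits of the sigmoid importance gate and
of the (noiseless) softmax top-1 gate equals the deterministic mask
`𝟙[uᵢ = max_k u_k] · 𝟙[uᵢ > τ]`. -/
theorem relaxed_mask_consistency {N : ℕ} (u : Fin N → ℝ)
    (istar : Fin N) (hstar : ∀ k, k ≠ istar → u k < u istar)
    (τ : ℝ) (hτ : ∀ i, u i ≠ τ) (i : Fin N) :
    ∃ a b : ℝ,
      Tendsto (fun η : ℝ => 1 / (1 + Real.exp (-((u i - τ) / η))))
        (𝓝[>] (0 : ℝ)) (𝓝 a) ∧
      Tendsto (fun γ : ℝ => Real.exp (u i / γ) / ∑ k, Real.exp (u k / γ))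
        (𝓝[>] (0 : ℝ)) (𝓝 b) ∧
      a * b =
        (if u i = Finset.univ.sup' ⟨istar, Finset.mem_univ istar⟩ u then (1 : ℝ) else 0) *
          (if τ < u i then (1 : ℝ) else 0) := by
  refine ⟨if τ < u i then 1 else 0, if i = istar then 1 else 0, ?_, softmax_lim u istar hstar i, ?_⟩
  · rcases (hτ i).lt_or_gt with h | h
    · simpa [if_neg (not_lt.mpr h.le)] using sig_lim_zero (u i - τ) (by linarith)
    · simpa [if_pos h] using sig_lim_one (u i - τ) (by linarith)
  · have hsup : Finset.univ.sup' ⟨istar, Finset.mem_univ istar⟩ u = u istar := by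
      refine le_antisymm (Finset.sup'_le _ _ fun k _ => ?_) (Finset.le_sup' _ (Finset.mem_univ istar))
      by_cases hk : k = istar
      · subst hk; exact le_rfl
      · exact (hstar k hk).le
    have hiff : u i = u istar ↔ i = istar := by
      constructor
      · intro h
        by_contra hne
        exact (hstar i hne).ne h
      · rintro rfl; rfl
    rw [hsup]
    by_cases h1 : i = istar <;> by_cases h2 : τ < u i <;>
      simp [h1, h2, hiff]
end
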